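/- (Horodecki 2×2 / 2×3 criterion) A state ρ acting on C² ⊗ C² or on C² ⊗ C³ is separable if and only if its partial transposition ρ^{T₂} is positive semidefinite, assuming the Størmer–Woronowicz decomposition: every positive linear map Λ from operators on C² (resp. C³) to operators on C² can be written Λ = Λ₁ + Λ₂ ∘ T with Λ₁, Λ₂ completely positive. -/

import Mathlib

open Matrix
open scoped Kronecker ComplexOrder

/-- A quantum state: positive semidefinite operator of trace one. -/
def IsState {ι : Type*} [Fintype ι] [DecidableEq ι] (A : Matrix ι ι ℂ) : Prop :=
  A.PosSemidef ∧ A.trace = 1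

/-- Finite convex combinations of product states on `C^m ⊗ C^n`. -/
def SepCombos (m n : ℕ) : Set (Matrix (Fin m × Fin n) (Fin m × Fin n) ℂ) :=
  {ρ | ∃ (k : ℕ) (p : Fin k → ℝ) (σ : Fin k → Matrix (Fin m) (Fin m) ℂ)
      (τ : Fin k → Matrix (Fin n) (Fin n) ℂ),
      (∀ i, 0 ≤ p i) ∧ (∑ i, p i) = 1 ∧ (∀ i, IsState (σ i)) ∧ (∀ i, IsState (τ i)) ∧
      ρ = ∑ i, (p i : ℂ) • (σ i ⊗ₖ τ i)}

/-- A separable state: a state in the closure of convex combinations of product states. -/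
def SepState {m n : ℕ} (ρ : Matrix (Fin m × Fin n) (Fin m × Fin n) ℂ) : Prop :=
  IsState ρ ∧ ρ ∈ closure (SepCombos m n)

/-- A positive map: maps positive semidefinite matrices to positive semidefinite ones. -/
def IsPositiveMap {n k : ℕ}
    (Λ : Matrix (Fin n) (Fin n) ℂ →ₗ[ℂ] Matrix (Fin k) (Fin k) ℂ) : Prop :=
  ∀ A, A.PosSemidef → (Λ A).PosSemidef

/-- The map `I ⊗ Λ` acting on operators on `C^m ⊗ C^n`. -/
def idOtimes {m n k : ℕ}
    (Λ : Matrix (Fin n) (Fin n) ℂ →ₗ[ℂ] Matrix (Fin k) (Fin k) ℂ)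
    (ρ : Matrix (Fin m × Fin n) (Fin m × Fin n) ℂ) :
    Matrix (Fin m × Fin k) (Fin m × Fin k) ℂ :=
  fun p q => Λ (fun μ ν => ρ (p.1, μ) (q.1, ν)) p.2 q.2

/-- The map `Λ ⊗ I_k`. -/
def otimesId {n m : ℕ}
    (Λ : Matrix (Fin n) (Fin n) ℂ →ₗ[ℂ] Matrix (Fin m) (Fin m) ℂ) (k : ℕ)
    (A : Matrix (Fin n × Fin k) (Fin n × Fin k) ℂ) :
    Matrix (Fin m × Fin k) (Fin m × Fin k) ℂ :=
  fun p q => Λ (fun i j => A (i, p.2) (j, q.2)) p.1 q.1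

/-- Complete positivity. -/
def IsCompletelyPositive {n m : ℕ}
    (Λ : Matrix (Fin n) (Fin n) ℂ →ₗ[ℂ] Matrix (Fin m) (Fin m) ℂ) : Prop :=
  ∀ k : ℕ, ∀ A : Matrix (Fin n × Fin k) (Fin n × Fin k) ℂ,
    A.PosSemidef → (otimesId Λ k A).PosSemidef

/-- Partial transposition with respect to the second factor. -/
def ptranspose {α β : Type*} (ρ : Matrix (α × β) (α × β) ℂ) : Matrix (α × β) (α × β) ℂ :=
  fun p q => ρ (p.1, q.2) (q.1, p.2)

/-- An orthogonal projection matrix. -/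
def IsProjMat {ι : Type*} [Fintype ι] (P : Matrix ι ι ℂ) : Prop :=
  P.IsHermitian ∧ P * P = P

/-- The transpose map as a linear map. -/
def transposeLM (n : ℕ) : Matrix (Fin n) (Fin n) ℂ →ₗ[ℂ] Matrix (Fin n) (Fin n) ℂ where
  toFun := Matrix.transpose
  map_add' := fun _ _ => Matrix.transpose_add _ _
  map_smul' := fun _ _ => Matrix.transpose_smul _ _

/-! ### Auxiliary lemmas -/

noncomputable instance (priority := 100) matrixLocallyConvex
    {ι : Type*} [Fintype ι] : LocallyConvexSpace ℝ (Matrix ι ι ℂ) :=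
  (inferInstance : LocallyConvexSpace ℝ (ι → ι → ℂ))

lemma psd_exists_conjTranspose_mul_self {ι : Type*} [Fintype ι] [DecidableEq ι]
    {M : Matrix ι ι ℂ} (hM : M.PosSemidef) : ∃ B : Matrix ι ι ℂ, M = Bᴴ * B := by
  open scoped MatrixOrder in
  obtain ⟨B, rfl⟩ := CStarAlgebra.nonneg_iff_eq_star_mul_self.mp hM.nonneg
  exact ⟨B, rfl⟩

lemma quad_eq_diag {ι κ : Type*} [Fintype ι] (C : Matrix ι ι ℂ) (B : Matrix κ ι ℂ) (c : κ) :
    (B * C * Bᴴ) c c = star (fun q => star (B c q)) ⬝ᵥ C *ᵥ (fun q => star (B c q)) := by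
  simp only [Matrix.mul_apply, Matrix.conjTranspose_apply, dotProduct, Matrix.mulVec,
    Finset.sum_mul, Finset.mul_sum, Pi.star_apply, star_star]
  rw [Finset.sum_comm]
  apply Finset.sum_congr rfl; intro p _
  apply Finset.sum_congr rfl; intro q _
  ring

lemma trace_mul_psd_nonneg {ι : Type*} [Fintype ι] [DecidableEq ι]
    {C M : Matrix ι ι ℂ} (hC : C.PosSemidef) (hM : M.PosSemidef) :
    0 ≤ (C * M).trace := by
  obtain ⟨B, rfl⟩ := psd_exists_conjTranspose_mul_self hM
  have h1 : (C * (Bᴴ * B)).trace = (B * C * Bᴴ).trace := by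
    rw [← Matrix.mul_assoc, Matrix.trace_mul_comm (C * Bᴴ) B, ← Matrix.mul_assoc]
  rw [h1, Matrix.trace]
  apply Finset.sum_nonneg
  intro c _
  rw [Matrix.diag_apply, quad_eq_diag]
  exact hC.dotProduct_mulVec_nonneg _

lemma posSemidef_real_smul {ι : Type*} [Fintype ι] {M : Matrix ι ι ℂ} (hM : M.PosSemidef)
    {c : ℝ} (hc : 0 ≤ c) : ((c : ℂ) • M).PosSemidef := by
  rw [Matrix.posSemidef_iff_dotProduct_mulVec]
  constructor
  · rw [Matrix.IsHermitian, Matrix.conjTranspose_smul, hM.1.eq]; congr 1; simp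
  · intro x
    rw [Matrix.smul_mulVec, dotProduct_smul]
    exact mul_nonneg (by exact_mod_cast Complex.zero_le_real.2 hc) (hM.dotProduct_mulVec_nonneg x)

lemma posSemidef_sum {ι κ : Type*} [Fintype ι] (s : Finset κ) (f : κ → Matrix ι ι ℂ)
    (hf : ∀ i ∈ s, (f i).PosSemidef) : (∑ i ∈ s, f i).PosSemidef := by
  classical
  induction s using Finset.induction_on with
  | empty => simpa using Matrix.PosSemidef.zero
  | insert _ _ h ih =>
      rw [Finset.sum_insert h]
      exact (hf _ (Finset.mem_insert_self _ _)).add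
        (ih fun i hi => hf i (Finset.mem_insert_of_mem hi))

lemma conjTranspose_kron {m n m' n' : Type*} (A : Matrix m n ℂ) (B : Matrix m' n' ℂ) :
    (A ⊗ₖ B)ᴴ = Aᴴ ⊗ₖ Bᴴ := by
  ext ⟨i, j⟩ ⟨k, l⟩
  simp [Matrix.conjTranspose_apply, Matrix.kroneckerMap_apply, mul_comm]

lemma kron_posSemidef {m n : Type*} [Fintype m] [Fintype n] [DecidableEq m] [DecidableEq n]
    {A : Matrix m m ℂ} {B : Matrix n n ℂ} (hA : A.PosSemidef) (hB : B.PosSemidef) :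
    (A ⊗ₖ B).PosSemidef := by
  obtain ⟨P, rfl⟩ := psd_exists_conjTranspose_mul_self hA
  obtain ⟨Q, rfl⟩ := psd_exists_conjTranspose_mul_self hB
  rw [Matrix.mul_kronecker_mul, ← conjTranspose_kron]
  exact Matrix.posSemidef_conjTranspose_mul_self _

lemma kron_herm {m n : Type*} {A : Matrix m m ℂ} {B : Matrix n n ℂ}
    (hA : A.IsHermitian) (hB : B.IsHermitian) : (A ⊗ₖ B).IsHermitian := by
  show _ = _
  ext ⟨i, μ⟩ ⟨j, ν⟩
  simp only [Matrix.conjTranspose_apply, Matrix.kroneckerMap_apply, star_mul']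
  rw [mul_comm, hA.apply, hB.apply]
  ring

lemma isClosed_posSemidef {ι : Type*} [Fintype ι] [DecidableEq ι] :
    IsClosed {M : Matrix ι ι ℂ | M.PosSemidef} := by
  have h : {M : Matrix ι ι ℂ | M.PosSemidef} =
      {M : Matrix ι ι ℂ | Mᴴ = M} ∩ ⋂ x : ι → ℂ, {M | 0 ≤ star x ⬝ᵥ M *ᵥ x} := by
    ext M; rw [Set.mem_setOf_eq, Matrix.posSemidef_iff_dotProduct_mulVec]; constructor
    · rintro ⟨h1, h2⟩; exact ⟨h1, Set.mem_iInter.2 fun x => h2 x⟩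
    · rintro ⟨h1, h2⟩; exact ⟨h1, fun x => Set.mem_iInter.1 h2 x⟩
  rw [h]
  apply IsClosed.inter
  · exact isClosed_eq continuous_id.matrix_conjTranspose continuous_id
  · apply isClosed_iInter
    intro x
    have hc : Continuous fun M : Matrix ι ι ℂ => star x ⬝ᵥ M *ᵥ x :=
      (continuous_const).dotProduct (continuous_id.matrix_mulVec continuous_const)
    have hset : IsClosed {z : ℂ | 0 ≤ z} := by
      have h2 : {z : ℂ | 0 ≤ z} = (Complex.re ⁻¹' Set.Ici 0) ∩ (Complex.im ⁻¹' {0}) := by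
        ext z; simp [Complex.le_def, Set.mem_Ici, eq_comm]
      rw [h2]
      exact (isClosed_Ici.preimage Complex.continuous_re).inter
        (isClosed_singleton.preimage Complex.continuous_im)
    exact hset.preimage hc

lemma continuous_ptranspose {α β : Type*} [Fintype α] [Fintype β] :
    Continuous (ptranspose (α := α) (β := β)) := by
  apply continuous_matrix
  intro p q
  exact continuous_id.matrix_elem _ _

lemma ptranspose_sepCombo {m n : ℕ} {ρ : Matrix (Fin m × Fin n) (Fin m × Fin n) ℂ}
    (hρ : ρ ∈ SepCombos m n) : (ptranspose ρ).PosSemidef := by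
  obtain ⟨k, p, σ, τ, hp, _, hσ, hτ, rfl⟩ := hρ
  have h : ptranspose (∑ i, (p i : ℂ) • (σ i ⊗ₖ τ i))
      = ∑ i, (p i : ℂ) • (σ i ⊗ₖ (τ i)ᵀ) := by
    ext ⟨a, b⟩ ⟨c, d⟩
    simp [ptranspose, Matrix.sum_apply, Matrix.kroneckerMap_apply]
  rw [h]
  exact posSemidef_sum _ _ fun i _ =>
    posSemidef_real_smul (kron_posSemidef (hσ i).1 ((hτ i).1.transpose)) (hp i)

lemma sep_closure_ppt {m n : ℕ} {ρ : Matrix (Fin m × Fin n) (Fin m × Fin n) ℂ}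
    (hρ : ρ ∈ closure (SepCombos m n)) : (ptranspose ρ).PosSemidef := by
  have h1 : ptranspose ρ ∈ closure (ptranspose '' SepCombos m n) :=
    image_closure_subset_closure_image continuous_ptranspose ⟨ρ, hρ, rfl⟩
  have h2 : closure (ptranspose '' SepCombos m n) ⊆ {M | M.PosSemidef} :=
    closure_minimal (by rintro _ ⟨σ', hσ, rfl⟩; exact ptranspose_sepCombo hσ) isClosed_posSemidef
  exact h2 h1

lemma sepCombos_convex (m n : ℕ) : Convex ℝ (SepCombos m n) := by
  rintro x ⟨k₁, p₁, σ₁, τ₁, hp₁, hs₁, hσ₁, hτ₁, rfl⟩ y ⟨k₂, p₂, σ₂, τ₂, hp₂, hs₂, hσ₂, hτ₂, rfl⟩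
    a b ha hb hab
  refine ⟨k₁ + k₂, Fin.append (fun i => a * p₁ i) (fun i => b * p₂ i),
    Fin.append σ₁ σ₂, Fin.append τ₁ τ₂, ?_, ?_, ?_, ?_, ?_⟩
  · intro i
    induction i using Fin.addCases with
    | left j => rw [Fin.append_left]; exact mul_nonneg ha (hp₁ _)
    | right j => rw [Fin.append_right]; exact mul_nonneg hb (hp₂ _)
  · rw [Fin.sum_univ_add]
    simp only [Fin.append_left, Fin.append_right, ← Finset.mul_sum, hs₁, hs₂]
    simpa using hab
  · intro i
    induction i using Fin.addCases with
    | left j => rw [Fin.append_left]; exact hσ₁ _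
    | right j => rw [Fin.append_right]; exact hσ₂ _
  · intro i
    induction i using Fin.addCases with
    | left j => rw [Fin.append_left]; exact hτ₁ _
    | right j => rw [Fin.append_right]; exact hτ₂ _
  · rw [Fin.sum_univ_add]
    simp only [Fin.append_left, Fin.append_right]
    have hsm : ∀ (c : ℝ) (M : Matrix (Fin m × Fin n) (Fin m × Fin n) ℂ), c • M = (c : ℂ) • M := by
      intro c M; ext p q; simp [Complex.real_smul]
    rw [hsm a, hsm b, Finset.smul_sum, Finset.smul_sum]
    congr 1 <;> (apply Finset.sum_congr rfl; intro i _; push_cast; rw [smul_smul])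

lemma matrix_decomp {ι : Type*} [Fintype ι] [DecidableEq ι] (M : Matrix ι ι ℂ) :
    M = ∑ p : ι × ι, ((M p.1 p.2).re • single p.1 p.2 (1:ℂ)
      + (M p.1 p.2).im • (Complex.I • single p.1 p.2 (1:ℂ))) := by
  ext a b
  rw [Matrix.sum_apply]
  rw [Finset.sum_eq_single (a, b)]
  · simp only [Matrix.add_apply, Matrix.smul_apply, Matrix.single, Matrix.of_apply,
      and_self, if_true, smul_eq_mul, Complex.real_smul]
    rw [mul_one, mul_one]
    exact (Complex.re_add_im _).symm
  · rintro ⟨r, c⟩ _ hne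
    simp only [Matrix.add_apply, Matrix.smul_apply, Matrix.single, Matrix.of_apply]
    have h : ¬(r = a ∧ c = b) := by rintro ⟨rfl, rfl⟩; exact hne rfl
    simp [h]
  · intro h; exact absurd (Finset.mem_univ _) h

lemma exists_witness_matrix {ι : Type*} [Fintype ι] [DecidableEq ι]
    (f : Matrix ι ι ℂ →L[ℝ] ℝ) :
    ∃ W : Matrix ι ι ℂ, ∀ M, ((W * M).trace).re = f M := by
  set W : Matrix ι ι ℂ := Matrix.of fun i j => ((f (single j i 1) : ℝ) : ℂ)
    - Complex.I * ((f (Complex.I • single j i 1) : ℝ) : ℂ) with hW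
  refine ⟨W, fun M => ?_⟩
  have hL : ((W * M).trace).re
      = ∑ i : ι, ∑ j : ι, ((f (single j i 1)) * (M j i).re
        + (f (Complex.I • single j i 1)) * (M j i).im) := by
    simp only [Matrix.trace, Matrix.diag_apply, Complex.re_sum, Matrix.mul_apply]
    apply Finset.sum_congr rfl; intro i _
    apply Finset.sum_congr rfl; intro j _
    simp only [hW, Matrix.of_apply, Complex.mul_re, Complex.sub_re, Complex.sub_im,
      Complex.ofReal_re, Complex.ofReal_im, Complex.mul_re, Complex.mul_im,
      Complex.I_re, Complex.I_im]
    ring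
  rw [hL]
  conv_rhs => rw [matrix_decomp M]
  rw [map_sum, ← Fintype.sum_prod_type']
  apply Fintype.sum_equiv (Equiv.prodComm ι ι)
  intro x
  simp only [Equiv.prodComm_apply, Prod.fst_swap, Prod.snd_swap, map_add,
    ContinuousLinearMap.map_smul, smul_eq_mul]
  ring

lemma vecMulVec_posSemidef {ι : Type*} [Fintype ι] (y : ι → ℂ) :
    (vecMulVec y (star y)).PosSemidef := by
  rw [Matrix.posSemidef_iff_dotProduct_mulVec]
  constructor
  · ext i j
    simp [Matrix.conjTranspose_apply, Matrix.vecMulVec_apply, mul_comm]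
  · intro z
    have h : star z ⬝ᵥ (vecMulVec y (star y)) *ᵥ z
        = (star z ⬝ᵥ y) * star (star z ⬝ᵥ y) := by
      simp only [dotProduct, Matrix.mulVec, Matrix.vecMulVec_apply, Pi.star_apply,
        star_sum, star_mul', star_star, Finset.mul_sum, Finset.sum_mul]
      rw [Finset.sum_comm]
      apply Finset.sum_congr rfl; intro i _
      apply Finset.sum_congr rfl; intro j _
      ring
    rw [h]
    exact mul_star_self_nonneg _

lemma trace_vecMulVec {ι : Type*} [Fintype ι] (y : ι → ℂ) :
    (vecMulVec y (star y)).trace = ((∑ i, Complex.normSq (y i) : ℝ) : ℂ) := by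
  simp only [Matrix.trace, Matrix.diag_apply, Matrix.vecMulVec_apply, Pi.star_apply]
  push_cast
  apply Finset.sum_congr rfl; intro i _
  rw [mul_comm, Complex.normSq_eq_conj_mul_self, Complex.star_def]

noncomputable def lam {m n : ℕ} (A : Matrix (Fin m × Fin n) (Fin m × Fin n) ℂ) :
    Matrix (Fin n) (Fin n) ℂ →ₗ[ℂ] Matrix (Fin m) (Fin m) ℂ where
  toFun X := Matrix.of fun i i' => ∑ μ, ∑ ν, A (i, μ) (i', ν) * X μ ν
  map_add' X Y := by
    ext i i'
    simp [Matrix.add_apply, mul_add, Finset.sum_add_distrib]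
  map_smul' c X := by
    ext i i'
    simp only [Matrix.of_apply, Matrix.smul_apply, smul_eq_mul, RingHom.id_apply,
      Finset.mul_sum]
    apply Finset.sum_congr rfl; intros
    apply Finset.sum_congr rfl; intros
    ring

lemma lam_apply_std {m n : ℕ} (A : Matrix (Fin m × Fin n) (Fin m × Fin n) ℂ)
    (μ ν : Fin n) (i i' : Fin m) :
    lam A (single μ ν 1) i i' = A (i, μ) (i', ν) := by
  simp only [lam, LinearMap.coe_mk, AddHom.coe_mk, Matrix.of_apply]
  rw [Finset.sum_eq_single μ]
  · rw [Finset.sum_eq_single ν]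
    · simp [Matrix.single]
    · intro b _ hb; simp [Matrix.single, hb.symm]
    · intro h; exact absurd (Finset.mem_univ _) h
  · intro a _ ha
    apply Finset.sum_eq_zero; intro b _
    simp [Matrix.single, ha.symm]
  · intro h; exact absurd (Finset.mem_univ _) h

lemma lam_quad_eq_trace {m n : ℕ} (A : Matrix (Fin m × Fin n) (Fin m × Fin n) ℂ)
    (X : Matrix (Fin n) (Fin n) ℂ) (x : Fin m → ℂ) :
    star x ⬝ᵥ (lam A X) *ᵥ x = (A * (vecMulVec x (star x) ⊗ₖ Xᵀ)).trace := by
  simp only [dotProduct, Matrix.mulVec, Matrix.trace, Matrix.diag_apply, Matrix.mul_apply,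
    lam, LinearMap.coe_mk, AddHom.coe_mk, Matrix.of_apply, Matrix.kroneckerMap_apply,
    Matrix.vecMulVec_apply, Matrix.transpose_apply, Pi.star_apply, Finset.mul_sum,
    Finset.sum_mul]
  rw [Fintype.sum_prod_type]
  apply Finset.sum_congr rfl; intro i _
  rw [Finset.sum_comm]
  apply Finset.sum_congr rfl; intro μ _
  rw [Fintype.sum_prod_type]
  apply Finset.sum_congr rfl; intro i' _
  apply Finset.sum_congr rfl; intro ν _
  ring

lemma trace_rank1_nonneg {m n : ℕ} (A : Matrix (Fin m × Fin n) (Fin m × Fin n) ℂ)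
    (h : ∀ (σ : Matrix (Fin m) (Fin m) ℂ) (τ : Matrix (Fin n) (Fin n) ℂ),
      IsState σ → IsState τ → 0 ≤ (A * (σ ⊗ₖ τ)).trace)
    (x : Fin m → ℂ) (b : Fin n → ℂ) :
    0 ≤ (A * (vecMulVec x (star x) ⊗ₖ vecMulVec b (star b))).trace := by
  set r : ℝ := ∑ i, Complex.normSq (x i) with hr
  set s : ℝ := ∑ i, Complex.normSq (b i) with hs
  have hr0 : 0 ≤ r := Finset.sum_nonneg fun i _ => Complex.normSq_nonneg _
  have hs0 : 0 ≤ s := Finset.sum_nonneg fun i _ => Complex.normSq_nonneg _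
  rcases eq_or_lt_of_le hr0 with hre | hrpos
  · have hx : x = 0 := by
      funext i
      have := (Finset.sum_eq_zero_iff_of_nonneg
        (fun i _ => Complex.normSq_nonneg (x i))).mp hre.symm i (Finset.mem_univ i)
      exact Complex.normSq_eq_zero.mp this
    subst hx
    have h0 : vecMulVec (0 : Fin m → ℂ) (star (0 : Fin m → ℂ)) = 0 := by
      ext i j; simp [Matrix.vecMulVec_apply]
    rw [h0]
    have h1 : ((0 : Matrix (Fin m) (Fin m) ℂ) ⊗ₖ vecMulVec b (star b)) = 0 := by
      ext ⟨i, μ⟩ ⟨j, ν⟩; simp [Matrix.kroneckerMap_apply]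
    rw [h1, Matrix.mul_zero, Matrix.trace_zero]
  rcases eq_or_lt_of_le hs0 with hse | hspos
  · have hb : b = 0 := by
      funext i
      have := (Finset.sum_eq_zero_iff_of_nonneg
        (fun i _ => Complex.normSq_nonneg (b i))).mp hse.symm i (Finset.mem_univ i)
      exact Complex.normSq_eq_zero.mp this
    subst hb
    have h0 : vecMulVec (0 : Fin n → ℂ) (star (0 : Fin n → ℂ)) = 0 := by
      ext i j; simp [Matrix.vecMulVec_apply]
    rw [h0]
    have h1 : (vecMulVec x (star x) ⊗ₖ (0 : Matrix (Fin n) (Fin n) ℂ)) = 0 := by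
      ext ⟨i, μ⟩ ⟨j, ν⟩; simp [Matrix.kroneckerMap_apply]
    rw [h1, Matrix.mul_zero, Matrix.trace_zero]
  set σ : Matrix (Fin m) (Fin m) ℂ := ((r⁻¹ : ℝ) : ℂ) • vecMulVec x (star x) with hσ
  set τ : Matrix (Fin n) (Fin n) ℂ := ((s⁻¹ : ℝ) : ℂ) • vecMulVec b (star b) with hτ
  have hσstate : IsState σ := by
    refine ⟨posSemidef_real_smul (vecMulVec_posSemidef x) (inv_nonneg.mpr hr0), ?_⟩
    rw [hσ, Matrix.trace_smul, _root_.trace_vecMulVec, ← hr, smul_eq_mul]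
    rw [← Complex.ofReal_mul, inv_mul_cancel₀ (ne_of_gt hrpos)]
    simp
  have hτstate : IsState τ := by
    refine ⟨posSemidef_real_smul (vecMulVec_posSemidef b) (inv_nonneg.mpr hs0), ?_⟩
    rw [hτ, Matrix.trace_smul, _root_.trace_vecMulVec, ← hs, smul_eq_mul]
    rw [← Complex.ofReal_mul, inv_mul_cancel₀ (ne_of_gt hspos)]
    simp
  have hkey : vecMulVec x (star x) ⊗ₖ vecMulVec b (star b) = ((r * s : ℝ) : ℂ) • (σ ⊗ₖ τ) := by
    rw [hσ, hτ, Matrix.smul_kronecker, Matrix.kronecker_smul, smul_smul, smul_smul]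
    rw [← Complex.ofReal_mul, ← Complex.ofReal_mul]
    rw [show r * s * r⁻¹ * s⁻¹ = (r * r⁻¹) * (s * s⁻¹) by ring,
      mul_inv_cancel₀ (ne_of_gt hrpos), mul_inv_cancel₀ (ne_of_gt hspos), mul_one]
    simp
  rw [hkey, Matrix.mul_smul, Matrix.trace_smul, smul_eq_mul]
  exact mul_nonneg (by exact_mod_cast Complex.zero_le_real.2 (mul_nonneg hr0 hs0))
    (h σ τ hσstate hτstate)

lemma transpose_decomp {n : ℕ} (B : Matrix (Fin n) (Fin n) ℂ) :
    (Bᴴ * B)ᵀ = ∑ c, vecMulVec (B c) (star (B c)) := by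
  ext μ ν
  simp only [Matrix.transpose_apply, Matrix.mul_apply, Matrix.conjTranspose_apply,
    Matrix.sum_apply, Matrix.vecMulVec_apply, Pi.star_apply]
  apply Finset.sum_congr rfl; intro c _
  ring

lemma kron_sum {m n k : ℕ} (M : Matrix (Fin m) (Fin m) ℂ) (f : Fin k → Matrix (Fin n) (Fin n) ℂ) :
    (M ⊗ₖ ∑ c, f c) = ∑ c, M ⊗ₖ f c := by
  ext ⟨i, μ⟩ ⟨j, ν⟩
  simp [Matrix.kroneckerMap_apply, Matrix.sum_apply, Finset.mul_sum]

lemma lam_isPositiveMap {m n : ℕ} (A : Matrix (Fin m × Fin n) (Fin m × Fin n) ℂ)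
    (hA : A.IsHermitian)
    (h : ∀ (σ : Matrix (Fin m) (Fin m) ℂ) (τ : Matrix (Fin n) (Fin n) ℂ),
      IsState σ → IsState τ → 0 ≤ (A * (σ ⊗ₖ τ)).trace) :
    IsPositiveMap (lam A) := by
  intro X hX
  rw [Matrix.posSemidef_iff_dotProduct_mulVec]
  constructor
  · ext i i'
    simp only [Matrix.conjTranspose_apply, lam, LinearMap.coe_mk, AddHom.coe_mk,
      Matrix.of_apply, star_sum, star_mul']
    rw [Finset.sum_comm]
    apply Finset.sum_congr rfl; intro μ _
    apply Finset.sum_congr rfl; intro ν _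
    rw [mul_comm, hA.apply, hX.1.apply]
    ring
  · intro x
    obtain ⟨B, rfl⟩ := psd_exists_conjTranspose_mul_self hX
    rw [lam_quad_eq_trace, transpose_decomp, kron_sum, Finset.mul_sum, Matrix.trace_sum]
    exact Finset.sum_nonneg fun c _ => trace_rank1_nonneg A h x (B c)

lemma herm_smul_real {ι : Type*} [Fintype ι] {M : Matrix ι ι ℂ} (hM : M.IsHermitian) (c : ℝ) :
    ((c : ℂ) • M).IsHermitian := by
  rw [Matrix.IsHermitian, Matrix.conjTranspose_smul, hM.eq]
  congr 1
  simp

lemma trace_herm_part {ι : Type*} [Fintype ι] (W M : Matrix ι ι ℂ) (hM : M.IsHermitian) :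
    ((((1:ℝ)/2 : ℝ) : ℂ) • (W + Wᴴ) * M).trace = (((W * M).trace.re : ℝ) : ℂ) := by
  rw [Matrix.smul_mul, Matrix.trace_smul, Matrix.add_mul, Matrix.trace_add]
  have h1 : (Wᴴ * M).trace = star ((W * M).trace) := by
    conv_lhs => rw [← hM.eq]
    rw [← Matrix.conjTranspose_mul, Matrix.trace_conjTranspose, Matrix.trace_mul_comm]
  rw [h1, smul_eq_mul]
  have h2 := Complex.add_conj ((W * M).trace)
  rw [Complex.star_def, h2]
  push_cast
  ring

lemma trace_witness {ι : Type*} [Fintype ι] [DecidableEq ι] (W M : Matrix ι ι ℂ)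
    (hM : M.IsHermitian) (hMtr : M.trace = 1) (u : ℝ) :
    (((u : ℂ) • (1 : Matrix ι ι ℂ) - (((1:ℝ)/2 : ℝ) : ℂ) • (W + Wᴴ)) * M).trace
      = ((u - (W * M).trace.re : ℝ) : ℂ) := by
  rw [Matrix.sub_mul, Matrix.trace_sub, Matrix.smul_mul, Matrix.one_mul, Matrix.trace_smul,
    hMtr, trace_herm_part W M hM]
  rw [smul_eq_mul, mul_one]
  push_cast
  ring

noncomputable def omegaVec (n : ℕ) : Fin n × Fin n → ℂ := fun p => if p.1 = p.2 then 1 else 0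

noncomputable def omegaMat (n : ℕ) : Matrix (Fin n × Fin n) (Fin n × Fin n) ℂ :=
  vecMulVec (omegaVec n) (star (omegaVec n))

lemma omegaMat_block {n : ℕ} (a b : Fin n) :
    (fun μ ν => omegaMat n (μ, a) (ν, b))
      = (single a b (1:ℂ) : Matrix (Fin n) (Fin n) ℂ) := by
  funext μ ν
  simp only [omegaMat, Matrix.vecMulVec_apply, omegaVec, Pi.star_apply, Matrix.single,
    Matrix.of_apply]
  by_cases h1 : a = μ <;> by_cases h2 : b = ν <;>
    simp [h1, h2, eq_comm]

lemma choi_entry {n m : ℕ} (Λ : Matrix (Fin n) (Fin n) ℂ →ₗ[ℂ] Matrix (Fin m) (Fin m) ℂ)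
    (i i' : Fin m) (a b : Fin n) :
    otimesId Λ n (omegaMat n) (i, a) (i', b) = Λ (single a b 1) i i' := by
  show Λ (fun μ ν => omegaMat n (μ, a) (ν, b)) i i' = _
  rw [omegaMat_block]

lemma std_transpose {n : ℕ} (μ ν : Fin n) :
    (single μ ν (1:ℂ))ᵀ = single ν μ (1:ℂ) := by
  ext a b
  simp only [Matrix.transpose_apply, Matrix.single, Matrix.of_apply]
  by_cases h1 : μ = b <;> by_cases h2 : ν = a <;> simp [h1, h2]

lemma trace_split {m n : ℕ} (A C₁ C₂ ρ : Matrix (Fin m × Fin n) (Fin m × Fin n) ℂ)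
    (hdecomp : ∀ i μ i' ν, A (i, μ) (i', ν) = C₁ (i, μ) (i', ν) + C₂ (i, ν) (i', μ)) :
    (A * ρ).trace = (C₁ * ρ).trace + (C₂ * ptranspose ρ).trace := by
  have hg : Function.Involutive
      (fun z : (Fin m × Fin n) × (Fin m × Fin n) => ((z.1.1, z.2.2), (z.2.1, z.1.2))) :=
    fun z => rfl
  have hswap : ∑ p : Fin m × Fin n, ∑ q : Fin m × Fin n, C₂ (p.1, q.2) (q.1, p.2) * ρ q p
      = ∑ p : Fin m × Fin n, ∑ q : Fin m × Fin n, C₂ p q * ρ (q.1, p.2) (p.1, q.2) := by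
    rw [← Fintype.sum_prod_type', ← Fintype.sum_prod_type']
    exact Fintype.sum_equiv hg.toPerm _ _ (fun z => rfl)
  simp only [Matrix.trace, Matrix.diag_apply, Matrix.mul_apply, ptranspose]
  have hterm : ∀ p q : Fin m × Fin n,
      A p q * ρ q p = C₁ p q * ρ q p + C₂ (p.1, q.2) (q.1, p.2) * ρ q p := by
    intro p q
    have h := hdecomp p.1 p.2 q.1 q.2
    rw [show A p q = A (p.1, p.2) (q.1, q.2) from rfl, h]
    ring
  calc ∑ p : Fin m × Fin n, ∑ q : Fin m × Fin n, A p q * ρ q p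
      = ∑ p : Fin m × Fin n, ∑ q : Fin m × Fin n,
          (C₁ p q * ρ q p + C₂ (p.1, q.2) (q.1, p.2) * ρ q p) := by
        apply Finset.sum_congr rfl; intro p _
        apply Finset.sum_congr rfl; intro q _
        exact hterm p q
    _ = (∑ p : Fin m × Fin n, ∑ q : Fin m × Fin n, C₁ p q * ρ q p)
        + ∑ p : Fin m × Fin n, ∑ q : Fin m × Fin n, C₂ (p.1, q.2) (q.1, p.2) * ρ q p := by
        rw [← Finset.sum_add_distrib]
        apply Finset.sum_congr rfl; intro p _
        rw [← Finset.sum_add_distrib]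
    _ = _ := by rw [hswap]

/-- Horodecki 2×2 / 2×3 criterion: given the Størmer–Woronowicz
decomposition of positive maps, a state on `C² ⊗ Cⁿ` (`n = 2` or `3`) is separable
iff its partial transpose is positive semidefinite. -/
theorem separable_iff_ppt_low_dim {n : ℕ} (hn : n = 2 ∨ n = 3)
    (SW : ∀ Λ : Matrix (Fin n) (Fin n) ℂ →ₗ[ℂ] Matrix (Fin 2) (Fin 2) ℂ,
      IsPositiveMap Λ →
        ∃ Λ₁ Λ₂ : Matrix (Fin n) (Fin n) ℂ →ₗ[ℂ] Matrix (Fin 2) (Fin 2) ℂ,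
          IsCompletelyPositive Λ₁ ∧ IsCompletelyPositive Λ₂ ∧
            Λ = Λ₁ + Λ₂ ∘ₗ transposeLM n)
    (ρ : Matrix (Fin 2 × Fin n) (Fin 2 × Fin n) ℂ) (hρ : IsState ρ) :
    SepState ρ ↔ (ptranspose ρ).PosSemidef := by
  constructor
  · rintro ⟨-, hmem⟩
    exact sep_closure_ppt hmem
  · intro hppt
    refine ⟨hρ, ?_⟩
    by_contra hmem
    -- Hahn–Banach separation
    obtain ⟨f, u, hsep, hu⟩ := geometric_hahn_banach_closed_point
      ((sepCombos_convex 2 n).closure) isClosed_closure hmem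
    obtain ⟨W, hW⟩ := exists_witness_matrix f
    -- the entanglement witness
    set A : Matrix (Fin 2 × Fin n) (Fin 2 × Fin n) ℂ :=
      (u : ℂ) • (1 : Matrix (Fin 2 × Fin n) (Fin 2 × Fin n) ℂ)
        - (((1:ℝ)/2 : ℝ) : ℂ) • (W + Wᴴ) with hA
    have hAherm : A.IsHermitian := by
      rw [hA]
      exact (herm_smul_real (Matrix.isHermitian_one) u).sub
        (herm_smul_real (Matrix.isHermitian_add_transpose_self W) _)
    -- nonnegativity on product states
    have hprod : ∀ (σ : Matrix (Fin 2) (Fin 2) ℂ) (τ : Matrix (Fin n) (Fin n) ℂ),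
        IsState σ → IsState τ → 0 ≤ (A * (σ ⊗ₖ τ)).trace := by
      intro σ τ hσ hτ
      have hherm : (σ ⊗ₖ τ).IsHermitian := kron_herm hσ.1.1 hτ.1.1
      have htr : (σ ⊗ₖ τ).trace = 1 := by
        rw [Matrix.trace_kronecker, hσ.2, hτ.2, mul_one]
      rw [hA, trace_witness W _ hherm htr u, hW]
      have hmem' : σ ⊗ₖ τ ∈ SepCombos 2 n := by
        refine ⟨1, fun _ => 1, fun _ => σ, fun _ => τ, fun _ => zero_le_one, by simp,
          fun _ => hσ, fun _ => hτ, by simp⟩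
      have hlt : f (σ ⊗ₖ τ) < u := hsep _ (subset_closure hmem')
      exact Complex.zero_le_real.2 (by linarith)
    -- positive map and Størmer–Woronowicz
    obtain ⟨Λ₁, Λ₂, hCP₁, hCP₂, hΛeq⟩ := SW (lam A) (lam_isPositiveMap A hAherm hprod)
    set C₁ := otimesId Λ₁ n (omegaMat n) with hC₁
    set C₂ := otimesId Λ₂ n (omegaMat n) with hC₂
    have hC₁psd : C₁.PosSemidef := hCP₁ n (omegaMat n) (vecMulVec_posSemidef _)
    have hC₂psd : C₂.PosSemidef := hCP₂ n (omegaMat n) (vecMulVec_posSemidef _)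
    have hdecomp : ∀ i μ i' ν, A (i, μ) (i', ν) = C₁ (i, μ) (i', ν) + C₂ (i, ν) (i', μ) := by
      intro i μ i' ν
      rw [← lam_apply_std A μ ν i i', hΛeq]
      have : (Λ₁ + Λ₂ ∘ₗ transposeLM n) (single μ ν 1)
          = Λ₁ (single μ ν 1) + Λ₂ (single ν μ 1) := by
        simp only [LinearMap.add_apply, LinearMap.comp_apply, transposeLM, LinearMap.coe_mk,
          AddHom.coe_mk]
        rw [std_transpose]
      rw [this, Matrix.add_apply, hC₁, hC₂, choi_entry, choi_entry]
    have hsplit := trace_split A C₁ C₂ ρ hdecomp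
    have hnonneg : 0 ≤ (A * ρ).trace := by
      rw [hsplit]
      exact add_nonneg (trace_mul_psd_nonneg hC₁psd hρ.1)
        (trace_mul_psd_nonneg hC₂psd hppt)
    have htrval : (A * ρ).trace = ((u - f ρ : ℝ) : ℂ) := by
      rw [hA, trace_witness W ρ hρ.1.1 hρ.2 u, hW]
    rw [htrval] at hnonneg
    have : 0 ≤ u - f ρ := Complex.zero_le_real.1 hnonneg
    linarith
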